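/- arXiv:2402.01229 — 2 statements merged into one kernel-verified Lean document; each statement's English description precedes it below -/
import Mathlib

section
/- For every real constant c, the functions x(t) = c·sin(t) and y(t) = c·cos(t) on [0, π/4] satisfy: x and y are differentiable with x'(t) = y(t) and y'(t) = −x(t) for all t ∈ [0, π/4], x(0) = 0, and y(π/4) = x(π/4). Consequently, the two-point boundary value problem x' = y, y' = −x on [0, π/4] with boundary conditions x(0) = 0 and y(π/4) = x(π/4) admits infinitely many (pairwise distinct for distinct c) solutions, so its solution is not unique. -/
open Real Set

lemma bvp_sol (c : ℝ) :
      (∀ t ∈ Icc (0 : ℝ) (π / 4),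
        HasDerivAt (fun s => c * Real.sin s) (c * Real.cos t) t ∧
        HasDerivAt (fun s => c * Real.cos s) (-(c * Real.sin t)) t) ∧
      c * Real.sin 0 = 0 ∧
      c * Real.cos (π / 4) = c * Real.sin (π / 4) := by
  refine ⟨fun t _ => ⟨(Real.hasDerivAt_sin t).const_mul c, ?_⟩, by simp, by
    rw [Real.cos_pi_div_four, Real.sin_pi_div_four]⟩
  simpa [mul_comm, mul_neg] using (Real.hasDerivAt_cos t).const_mul c

lemma bvp_inj : Function.Injective (fun c : ℝ =>
    ((fun t => c * Real.sin t), (fun t => c * Real.cos t))) := by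
  intro c c' h
  have := congrArg (fun p : (ℝ → ℝ) × (ℝ → ℝ) => p.2 0) h
  simpa using this

/-- For every `c`, the pair `x(t) = c sin t`, `y(t) = c cos t` solves the two-point
boundary value problem `x' = y`, `y' = -x` on `[0, π/4]`, `x 0 = 0`, `y (π/4) = x (π/4)`;
the solutions are pairwise distinct for distinct `c`, the solution set is infinite,
and hence the solution of the boundary value problem is not unique. -/
theorem bvp_sin_cos_nonuniqueness :
    (∀ c : ℝ,
      (∀ t ∈ Icc (0 : ℝ) (π / 4),
        HasDerivAt (fun s => c * Real.sin s) (c * Real.cos t) t ∧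
        HasDerivAt (fun s => c * Real.cos s) (-(c * Real.sin t)) t) ∧
      c * Real.sin 0 = 0 ∧
      c * Real.cos (π / 4) = c * Real.sin (π / 4))
    ∧ (∀ c c' : ℝ, c ≠ c' →
        ((fun t => c * Real.sin t), (fun t => c * Real.cos t)) ≠
        ((fun t => c' * Real.sin t), (fun t => c' * Real.cos t)))
    ∧ Set.Infinite {p : (ℝ → ℝ) × (ℝ → ℝ) |
        (∀ t ∈ Icc (0 : ℝ) (π / 4),
          HasDerivAt p.1 (p.2 t) t ∧ HasDerivAt p.2 (-(p.1 t)) t) ∧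
        p.1 0 = 0 ∧ p.2 (π / 4) = p.1 (π / 4)}
    ∧ ¬ ∃! p : (ℝ → ℝ) × (ℝ → ℝ),
        (∀ t ∈ Icc (0 : ℝ) (π / 4),
          HasDerivAt p.1 (p.2 t) t ∧ HasDerivAt p.2 (-(p.1 t)) t) ∧
        p.1 0 = 0 ∧ p.2 (π / 4) = p.1 (π / 4) := by
  have hmem : ∀ c : ℝ,
      ((fun t => c * Real.sin t), (fun t => c * Real.cos t)) ∈
      {p : (ℝ → ℝ) × (ℝ → ℝ) |
        (∀ t ∈ Icc (0 : ℝ) (π / 4),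
          HasDerivAt p.1 (p.2 t) t ∧ HasDerivAt p.2 (-(p.1 t)) t) ∧
        p.1 0 = 0 ∧ p.2 (π / 4) = p.1 (π / 4)} := fun c => bvp_sol c
  refine ⟨bvp_sol, fun c c' h => fun he => h (bvp_inj he), ?_, ?_⟩
  · exact Set.infinite_of_injective_forall_mem bvp_inj hmem
  · rintro ⟨p, hp, hu⟩
    have h0 := hu _ (hmem 0)
    have h1 := hu _ (hmem 1)
    have := h0.trans h1.symm
    exact zero_ne_one (bvp_inj this)
end

section
/- Let A ⊆ R^k be a convex set, λ > 0, M ≥ 0, and let H : R^p × R^k → R be such that for each q ∈ R^p the map α ↦ H(q, α) is differentiable on a neighborhood of A with gradient ∇_α H(q, ·) that is λ-strongly monotone on A (i.e. ⟨∇_α H(q,a) − ∇_α H(q,b), a − b⟩ ≥ λ‖a − b‖² for all a, b ∈ A), and such that ‖∇_α H(q, α) − ∇_α H(q', α)‖ ≤ M·‖q − q'‖ for all α ∈ A and q, q' ∈ R^p. If for each q the point α*(q) ∈ A minimizes H(q, ·) over A, then the map q ↦ α*(q) is Lipschitz continuous with constant M/λ: ‖α*(q) − α*(q')‖ ≤ (M/λ)·‖q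 − q'‖ for all q, q' ∈ R^p. -/
/-! Compare the first-order optimality conditions of the minimizers `a` of `H q ·` and `b` of
`H q' ·` over `A`: adding them to strong monotonicity of `∇_α H q` gives
`λ ‖a - b‖² ≤ ⟪∇_α H q' b - ∇_α H q b, a - b⟫ ≤ M ‖q - q'‖ ‖a - b‖`. -/

open InnerProductSpace

variable {E : Type*} [NormedAddCommGroup E] [InnerProductSpace ℝ E] [CompleteSpace E]

theorem IsMinOn.inner_gradient_sub_nonneg {f : E → ℝ} {A : Set E} {a b : E} (hA : Convex ℝ A)
    (hmin : IsMinOn f A a) (ha : a ∈ A) (hb : b ∈ A) (hf : DifferentiableAt ℝ f a) :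
    0 ≤ ⟪gradient f a, b - a⟫_ℝ := by
  have hfd : HasFDerivAt f (toDual ℝ E (gradient f a)) a :=
    hasGradientAt_iff_hasFDerivAt.mp hf.hasGradientAt
  simpa only [toDual_apply_apply] using hmin.localize.hasFDerivWithinAt_nonneg
    hfd.hasFDerivWithinAt (sub_mem_posTangentConeAt_of_segment_subset (hA.segment_subset ha hb))

theorem mul_norm_sub_le_norm_gradient_sub_of_isMinOn {f g : E → ℝ} {A : Set E} {a b : E}
    {lam : ℝ} (hA : Convex ℝ A) (ha : a ∈ A) (hb : b ∈ A)
    (hfa : IsMinOn f A a) (hgb : IsMinOn g A b)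
    (hf : DifferentiableAt ℝ f a) (hg : DifferentiableAt ℝ g b)
    (hmono : lam * ‖a - b‖ ^ 2 ≤ ⟪gradient f a - gradient f b, a - b⟫_ℝ) :
    lam * ‖a - b‖ ≤ ‖gradient g b - gradient f b‖ := by
  have hfirst_f : ⟪gradient f a, a - b⟫_ℝ ≤ 0 := by
    have := hfa.inner_gradient_sub_nonneg hA ha hb hf
    rwa [← neg_sub, inner_neg_right, neg_nonneg] at this
  have hfirst_g := hgb.inner_gradient_sub_nonneg hA hb ha hg
  have hsq : lam * ‖a - b‖ ^ 2 ≤ ‖gradient g b - gradient f b‖ * ‖a - b‖ :=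
    calc lam * ‖a - b‖ ^ 2 ≤ ⟪gradient f a - gradient f b, a - b⟫_ℝ := hmono
      _ ≤ ⟪gradient g b - gradient f b, a - b⟫_ℝ := by
        rw [inner_sub_left, inner_sub_left]; linarith
      _ ≤ ‖gradient g b - gradient f b‖ * ‖a - b‖ := real_inner_le_norm _ _
  rcases (norm_nonneg (a - b)).eq_or_lt with h0 | hpos
  · rw [← h0, mul_zero]
    exact norm_nonneg _
  · rw [sq, ← mul_assoc] at hsq
    exact le_of_mul_le_mul_right hsq hpos

theorem minimizer_lipschitz_in_parameter_general
    {p k : ℕ} (A : Set (EuclideanSpace ℝ (Fin k))) (hconv : Convex ℝ A)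
    (lam M : ℝ) (hlam : 0 < lam)
    (H : EuclideanSpace ℝ (Fin p) → EuclideanSpace ℝ (Fin k) → ℝ)
    (hdiff : ∀ q : EuclideanSpace ℝ (Fin p),
      ∃ U : Set (EuclideanSpace ℝ (Fin k)), IsOpen U ∧ A ⊆ U ∧ DifferentiableOn ℝ (H q) U)
    (hmono : ∀ q : EuclideanSpace ℝ (Fin p), ∀ a ∈ A, ∀ b ∈ A,
      lam * ‖a - b‖ ^ 2 ≤ (inner ℝ (gradient (H q) a - gradient (H q) b) (a - b) : ℝ))
    (hlip : ∀ α ∈ A, ∀ q q' : EuclideanSpace ℝ (Fin p),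
      ‖gradient (H q) α - gradient (H q') α‖ ≤ M * ‖q - q'‖)
    (αstar : EuclideanSpace ℝ (Fin p) → EuclideanSpace ℝ (Fin k))
    (hmin : ∀ q, αstar q ∈ A ∧ ∀ α ∈ A, H q (αstar q) ≤ H q α) :
    ∀ q q' : EuclideanSpace ℝ (Fin p),
      ‖αstar q - αstar q'‖ ≤ (M / lam) * ‖q - q'‖ := by
  have hdiffAt : ∀ q, ∀ α ∈ A, DifferentiableAt ℝ (H q) α := fun q α hα => by
    obtain ⟨U, hU, hAU, hdU⟩ := hdiff q
    exact (hdU α (hAU hα)).differentiableAt (hU.mem_nhds (hAU hα))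
  intro q q'
  obtain ⟨ha, hamin⟩ := hmin q
  obtain ⟨hb, hbmin⟩ := hmin q'
  have hstab := mul_norm_sub_le_norm_gradient_sub_of_isMinOn hconv ha hb
    (isMinOn_iff.mpr hamin) (isMinOn_iff.mpr hbmin) (hdiffAt q _ ha) (hdiffAt q' _ hb)
    (hmono q _ ha _ hb)
  rw [div_mul_eq_mul_div, le_div_iff₀ hlam, mul_comm]
  calc lam * ‖αstar q - αstar q'‖ ≤ ‖gradient (H q') (αstar q') - gradient (H q) (αstar q')‖ :=
        hstab
    _ ≤ M * ‖q - q'‖ := by rw [norm_sub_rev q]; exact hlip _ hb q' q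

/-- Lipschitz continuity of the minimizer in the parameter: if for each parameter `q` the map
`α ↦ H q α` is differentiable on a neighborhood of the convex set `A` with `λ`-strongly
monotone gradient on `A`, and the gradient is `M`-Lipschitz in the parameter `q` uniformly
over `A`, then any selection `q ↦ α*(q)` of minimizers of `H q ·` over `A` is Lipschitz with
constant `M / λ`. -/
theorem minimizer_lipschitz_in_parameter
    {p k : ℕ} (A : Set (EuclideanSpace ℝ (Fin k))) (hconv : Convex ℝ A)
    (lam M : ℝ) (hlam : 0 < lam) (hM : 0 ≤ M)
    (H : EuclideanSpace ℝ (Fin p) → EuclideanSpace ℝ (Fin k) → ℝ)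
    (hdiff : ∀ q : EuclideanSpace ℝ (Fin p),
      ∃ U : Set (EuclideanSpace ℝ (Fin k)), IsOpen U ∧ A ⊆ U ∧ DifferentiableOn ℝ (H q) U)
    (hmono : ∀ q : EuclideanSpace ℝ (Fin p), ∀ a ∈ A, ∀ b ∈ A,
      lam * ‖a - b‖ ^ 2 ≤ (inner ℝ (gradient (H q) a - gradient (H q) b) (a - b) : ℝ))
    (hlip : ∀ α ∈ A, ∀ q q' : EuclideanSpace ℝ (Fin p),
      ‖gradient (H q) α - gradient (H q') α‖ ≤ M * ‖q - q'‖)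
    (αstar : EuclideanSpace ℝ (Fin p) → EuclideanSpace ℝ (Fin k))
    (hmin : ∀ q, αstar q ∈ A ∧ ∀ α ∈ A, H q (αstar q) ≤ H q α) :
    ∀ q q' : EuclideanSpace ℝ (Fin p),
      ‖αstar q - αstar q'‖ ≤ (M / lam) * ‖q - q'‖ :=
  minimizer_lipschitz_in_parameter_general A hconv lam M hlam H hdiff hmono hlip αstar hmin
end
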